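/- arXiv:1412.3518 — 2 statements merged into one kernel-verified Lean document; each statement's English description precedes it below -/
import Mathlib

section
/- In the extended Spohn model obtained by adding binary variables D and E with equations D = ¬S ∧ A, E = S ∧ B, C = D ∨ E (A, B, S set by the context), in the context u where A = B = S = 1: A = 1 is not an actual cause of C = 1, while B = 1 and S = 1 are actual causes of C = 1, according to the HP definition. -/
open Classical

/-- A causal model over variable namespace ℕ (values are also coded as ℕ).
`V` is the finite set of endogenous variables; `F X ctx g` gives the value of the
structural equation for `X` given a context `ctx` (assignment to the exogenous
variables) and an assignment `g` to the endogenous variables. -/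
structure CM where
  V : Finset ℕ
  F : ℕ → (ℕ → ℕ) → (ℕ → ℕ) → ℕ

/-- `v` is a solution of all the structural equations of `M` in context `ctx`
(pinned to `0` outside `V` so that worlds are canonical). -/
def IsSol (M : CM) (ctx v : ℕ → ℕ) : Prop :=
  (∀ X ∈ M.V, v X = M.F X ctx v) ∧ ∀ X, X ∉ M.V → v X = 0

/-- `M` is recursive (acyclic): there is a total order on `V` such that each
equation depends only on strictly earlier endogenous variables. -/
def Recursive (M : CM) : Prop :=
  ∃ ord : ℕ → ℕ, Set.InjOn ord ↑M.V ∧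
    ∀ X ∈ M.V, ∀ ctx g h, (∀ Y ∈ M.V, ord Y < ord X → g Y = h Y) →
      M.F X ctx g = M.F X ctx h

/-- The model obtained by intervening according to the partial assignment `I`. -/
def CM.intervene (M : CM) (I : ℕ → Option ℕ) : CM :=
  ⟨M.V, fun X ctx g => (I X).getD (M.F X ctx g)⟩

/-- The intervention setting the variables in `S` to the values given by `f`. -/
def doSet (S : Finset ℕ) (f : ℕ → ℕ) : ℕ → Option ℕ :=
  fun Y => if Y ∈ S then some (f Y) else none

/-- `(M, ctx) ⊨ [I](X = x)`. -/
def Sat (M : CM) (ctx : ℕ → ℕ) (I : ℕ → Option ℕ) (X x : ℕ) : Prop :=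
  ∀ v, IsSol (M.intervene I) ctx v → v X = x

/-- Boolean combinations of primitive events `X = x`. -/
inductive BForm where
  | prim : ℕ → ℕ → BForm
  | not : BForm → BForm
  | and : BForm → BForm → BForm

def BForm.eval (v : ℕ → ℕ) : BForm → Prop
  | .prim X x => v X = x
  | .not φ => ¬ BForm.eval v φ
  | .and φ ψ => BForm.eval v φ ∧ BForm.eval v ψ

def BForm.vars : BForm → Finset ℕ
  | .prim X _ => {X}
  | .not φ => φ.vars
  | .and φ ψ => φ.vars ∪ ψ.vars

/-- `(M, ctx) ⊨ [I]φ`. -/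
def SatF (M : CM) (ctx : ℕ → ℕ) (I : ℕ → Option ℕ) (φ : BForm) : Prop :=
  ∀ v, IsSol (M.intervene I) ctx v → φ.eval v

/-- `M'` is a conservative extension of `M`: same exogenous variables (shared
namespace), `M.V ⊆ M'.V`, and for every context, every `X ∈ M.V`, and every
setting of the other variables of `M`, the intervened value of `X` agrees. -/
def ConsExt (M M' : CM) : Prop :=
  M.V ⊆ M'.V ∧
  ∀ ctx x, ∀ X ∈ M.V, ∀ w : ℕ → ℕ,
    (Sat M ctx (doSet (M.V.erase X) w) X x ↔ Sat M' ctx (doSet (M.V.erase X) w) X x)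

/-- The intervention `X⃗ ← x⃗', W⃗ ← w⃗` used in AC2(a). -/
def witI (Xs : Finset ℕ) (x' : ℕ → ℕ) (W : Finset ℕ) (w : ℕ → ℕ) : ℕ → Option ℕ :=
  fun Y => if Y ∈ Xs then some (x' Y) else if Y ∈ W then some (w Y) else none

/-- The intervention `X⃗ ← x⃗, Z⃗' ← z⃗, W⃗' ← w⃗` used in AC2(b) (here `vs` is the
actual solution, providing the actual values `z⃗`). -/
def acbI (Xs : Finset ℕ) (xv : ℕ → ℕ) (Z' : Finset ℕ) (vs : ℕ → ℕ)
    (W' : Finset ℕ) (w : ℕ → ℕ) : ℕ → Option ℕ :=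
  fun Y => if Y ∈ Xs then some (xv Y) else if Y ∈ Z' then some (vs Y)
    else if Y ∈ W' then some (w Y) else none

/-- `(W, w, x')` is a witness for AC2 (updated version, with AC2(b)). -/
def Wit (M : CM) (ctx : ℕ → ℕ) (Xs : Finset ℕ) (xv : ℕ → ℕ) (φ : BForm)
    (W : Finset ℕ) (w x' : ℕ → ℕ) : Prop :=
  W ⊆ M.V ∧ Xs ⊆ M.V \ W ∧
  SatF M ctx (witI Xs x' W w) (BForm.not φ) ∧
  ∀ vs, IsSol M ctx vs → ∀ W' ⊆ W, ∀ Z' ⊆ M.V \ W,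
    SatF M ctx (acbI Xs xv Z' vs W' w) φ

/-- `(W, w, x')` is a witness for AC2 in the original HP sense (with AC2(b'):
only `W` itself, not its subsets, is set to `w`). -/
def Wit' (M : CM) (ctx : ℕ → ℕ) (Xs : Finset ℕ) (xv : ℕ → ℕ) (φ : BForm)
    (W : Finset ℕ) (w x' : ℕ → ℕ) : Prop :=
  W ⊆ M.V ∧ Xs ⊆ M.V \ W ∧
  SatF M ctx (witI Xs x' W w) (BForm.not φ) ∧
  ∀ vs, IsSol M ctx vs → ∀ Z' ⊆ M.V \ W,
    SatF M ctx (acbI Xs xv Z' vs W w) φ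

/-- AC1: `X⃗ = x⃗` and `φ` hold in the actual world. -/
def AC1 (M : CM) (ctx : ℕ → ℕ) (Xs : Finset ℕ) (xv : ℕ → ℕ) (φ : BForm) : Prop :=
  ∀ v, IsSol M ctx v → (∀ X ∈ Xs, v X = xv X) ∧ φ.eval v

def PreCause (M : CM) (ctx : ℕ → ℕ) (Xs : Finset ℕ) (xv : ℕ → ℕ) (φ : BForm) : Prop :=
  AC1 M ctx Xs xv φ ∧ ∃ W w x', Wit M ctx Xs xv φ W w x'

/-- The (updated) HP definition of actual cause: AC1 ∧ AC2 ∧ AC3. -/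
def IsCause (M : CM) (ctx : ℕ → ℕ) (Xs : Finset ℕ) (xv : ℕ → ℕ) (φ : BForm) : Prop :=
  PreCause M ctx Xs xv φ ∧ ∀ Xs' ⊂ Xs, ¬ PreCause M ctx Xs' xv φ

def PreCause' (M : CM) (ctx : ℕ → ℕ) (Xs : Finset ℕ) (xv : ℕ → ℕ) (φ : BForm) : Prop :=
  AC1 M ctx Xs xv φ ∧ ∃ W w x', Wit' M ctx Xs xv φ W w x'

/-- The original HP definition of actual cause (with AC2(b')). -/
def IsCause' (M : CM) (ctx : ℕ → ℕ) (Xs : Finset ℕ) (xv : ℕ → ℕ) (φ : BForm) : Prop :=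
  PreCause' M ctx Xs xv φ ∧ ∀ Xs' ⊂ Xs, ¬ PreCause' M ctx Xs' xv φ

/-- An extended causal model: a causal model with a normality preorder on worlds. -/
structure ECM extends CM where
  normGE : (ℕ → ℕ) → (ℕ → ℕ) → Prop
  normGE_refl : ∀ s, normGE s s
  normGE_trans : ∀ s t u, normGE s t → normGE t u → normGE s u

/-- A world of `M`: an assignment to the endogenous variables (canonically `0` elsewhere). -/
def World (M : CM) (s : ℕ → ℕ) : Prop := ∀ X, X ∉ M.V → s X = 0

/-- The world determined by the intervention `I` in context `ctx` is at least as
normal as the actual world `s_ctx`. -/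
def NormAbove (M : ECM) (ctx : ℕ → ℕ) (I : ℕ → Option ℕ) : Prop :=
  ∀ s su, IsSol (M.toCM.intervene I) ctx s → IsSol M.toCM ctx su → M.normGE s su

/-- Witness for the extended HP definition: AC2 together with AC2(a⁺). -/
def EWit (M : ECM) (ctx : ℕ → ℕ) (Xs : Finset ℕ) (xv : ℕ → ℕ) (φ : BForm)
    (W : Finset ℕ) (w x' : ℕ → ℕ) : Prop :=
  Wit M.toCM ctx Xs xv φ W w x' ∧ NormAbove M ctx (witI Xs x' W w)

def EPreCause (M : ECM) (ctx : ℕ → ℕ) (Xs : Finset ℕ) (xv : ℕ → ℕ) (φ : BForm) : Prop :=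
  AC1 M.toCM ctx Xs xv φ ∧ ∃ W w x', EWit M ctx Xs xv φ W w x'

/-- The extended (normality-sensitive) HP definition of actual cause. -/
def EIsCause (M : ECM) (ctx : ℕ → ℕ) (Xs : Finset ℕ) (xv : ℕ → ℕ) (φ : BForm) : Prop :=
  EPreCause M ctx Xs xv φ ∧ ∀ Xs' ⊂ Xs, ¬ EPreCause M ctx Xs' xv φ

/-- In world `s`, variable `v0` takes on a value other than that specified by
the equations of `M` in context `ctx`. -/
def Deviates (M : CM) (ctx : ℕ → ℕ) (v0 : ℕ) (s : ℕ → ℕ) : Prop :=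
  ∀ v, IsSol (M.intervene (doSet (M.V.erase v0) s)) ctx v → v v0 ≠ s v0

/-- `(M, ctx)` respects the equations for `v0`: any world in which `v0` deviates
from its equation-determined value is not at least as normal as the actual world. -/
def Respects (M : ECM) (ctx : ℕ → ℕ) (v0 : ℕ) : Prop :=
  ∀ s, World M.toCM s → Deviates M.toCM ctx v0 s →
    ∀ su, IsSol M.toCM ctx su → ¬ M.normGE s su

/-- Conservative extension of extended causal models: conservative extension of
the underlying models plus condition CE on the normality preorders. -/
def EConsExt (M M' : ECM) : Prop :=
  ConsExt M.toCM M'.toCM ∧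
  ∀ ctx (W : Finset ℕ), W ⊆ M.V → ∀ w : ℕ → ℕ,
    (NormAbove M ctx (doSet W w) ↔ NormAbove M' ctx (doSet W w))

/-- Indicator of a proposition, used to express Boolean structural equations. -/
noncomputable def bI (p : Prop) : ℕ := if p then 1 else 0

/-- The extended Spohn model: A = 0, B = 1, S = 2, C = 3, D = 4, E = 5;
D = ¬S ∧ A, E = S ∧ B, C = D ∨ E. -/
noncomputable def MSp2 : CM :=
  ⟨{0, 1, 2, 3, 4, 5}, fun X ctx g =>
    if X = 4 then bI (g 2 = 0 ∧ g 0 = 1)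
    else if X = 5 then bI (g 2 = 1 ∧ g 1 = 1)
    else if X = 3 then bI (g 4 = 1 ∨ g 5 = 1)
    else ctx X⟩

/-!
In the actual world `A = B = S = 1`, `D = 0`, `E = C = 1`, and every intervention has a unique
solution, computed by `MSp2.sol`. For `B` and `S` the witnesses are `B ← 0` (with `W = ∅`) and
`S ← 0, A ← 0` (with `W = {A}`); AC2(b) holds because `C = 1` as soon as `B`, `S`, `E`, `C` are
free or at their actual values. `A = 1` fails AC2: `A` reaches `C` only through `D`, and AC2(b)
may freeze `D` at its actual value `0`. Minimality is automatic for singletons, since the empty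
set never satisfies AC2.
-/

theorem satF_iff_of_unique_sol {M : CM} {ctx v₀ : ℕ → ℕ} {I : ℕ → Option ℕ}
    (hsol : IsSol (M.intervene I) ctx v₀) (huniq : ∀ v, IsSol (M.intervene I) ctx v → v = v₀)
    (φ : BForm) : SatF M ctx I φ ↔ φ.eval v₀ :=
  ⟨fun h => h v₀ hsol, fun h v hv => huniq v hv ▸ h⟩

/-- With no cause variables, the interventions of AC2(a) and of AC2(b) (taking `W' = W`,
`Z' = ∅`) coincide, so AC2 would force both `φ` and `¬φ`. -/
theorem not_preCause_empty {M : CM} {ctx : ℕ → ℕ}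
    (hsol : ∀ I, ∃ v, IsSol (M.intervene I) ctx v) (xv : ℕ → ℕ) (φ : BForm) :
    ¬ PreCause M ctx ∅ xv φ := by
  rintro ⟨-, W, w, x', -, -, hneg, hpos⟩
  obtain ⟨vs, hvs⟩ := hsol fun _ => none
  have hI : acbI ∅ xv ∅ vs W w = witI ∅ x' W w := by
    funext Y
    simp [acbI, witI]
  have hφ := hpos vs hvs W le_rfl ∅ (Finset.empty_subset _)
  rw [hI] at hφ
  obtain ⟨v, hv⟩ := hsol (witI ∅ x' W w)
  exact hneg v hv (hφ v hv)

theorem isCause_singleton_iff {M : CM} {ctx : ℕ → ℕ}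
    (hsol : ∀ I, ∃ v, IsSol (M.intervene I) ctx v) (X : ℕ) (xv : ℕ → ℕ) (φ : BForm) :
    IsCause M ctx {X} xv φ ↔ PreCause M ctx {X} xv φ := by
  refine ⟨And.left, fun h => ⟨h, fun Xs hXs => ?_⟩⟩
  rw [Finset.ssubset_singleton_iff.1 hXs]
  exact not_preCause_empty hsol xv φ

theorem bI_eq_one {p : Prop} : bI p = 1 ↔ p := by
  by_cases h : p <;> simp [bI, h]

theorem acbI_getD_const {Xs Z' W' : Finset ℕ} {vs w : ℕ → ℕ} {c X : ℕ} (hvs : vs X = c)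
    (hW' : X ∉ W') : (acbI Xs (fun _ => c) Z' vs W' w X).getD c = c := by
  unfold acbI
  split_ifs <;> simp_all

namespace MSp2

variable (I : ℕ → Option ℕ)

-- The context `A = B = S = 1` enters as the default values of `valA`, `valB`, `valS`.
noncomputable def valA : ℕ := (I 0).getD 1
noncomputable def valB : ℕ := (I 1).getD 1
noncomputable def valS : ℕ := (I 2).getD 1
noncomputable def valD : ℕ := (I 4).getD (bI (valS I = 0 ∧ valA I = 1))
noncomputable def valE : ℕ := (I 5).getD (bI (valS I = 1 ∧ valB I = 1))
noncomputable def valC : ℕ := (I 3).getD (bI (valD I = 1 ∨ valE I = 1))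

noncomputable def sol : ℕ → ℕ := fun X =>
  if X = 0 then valA I else if X = 1 then valB I else if X = 2 then valS I
  else if X = 3 then valC I else if X = 4 then valD I else if X = 5 then valE I else 0

theorem isSol_sol : IsSol (MSp2.intervene I) (fun _ => 1) (sol I) := by
  constructor
  · intro X hX
    simp only [MSp2, CM.intervene, Finset.mem_insert, Finset.mem_singleton] at hX ⊢
    rcases hX with rfl | rfl | rfl | rfl | rfl | rfl <;>
      simp [sol, valA, valB, valS, valD, valE, valC]
  · intro X hX
    simp only [MSp2, CM.intervene, Finset.mem_insert, Finset.mem_singleton, not_or] at hX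
    simp [sol, hX]

theorem eq_sol_of_isSol {v : ℕ → ℕ} (h : IsSol (MSp2.intervene I) (fun _ => 1) v) :
    v = sol I := by
  obtain ⟨heq, hout⟩ := h
  have eqn : ∀ X ∈ MSp2.V, v X = (I X).getD (MSp2.F X (fun _ => 1) v) := heq
  have hA : v 0 = valA I := by simpa [MSp2, valA] using eqn 0 (by decide)
  have hB : v 1 = valB I := by simpa [MSp2, valB] using eqn 1 (by decide)
  have hS : v 2 = valS I := by simpa [MSp2, valS] using eqn 2 (by decide)
  have hD : v 4 = valD I := by simpa [MSp2, valD, hA, hS] using eqn 4 (by decide)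
  have hE : v 5 = valE I := by simpa [MSp2, valE, hB, hS] using eqn 5 (by decide)
  have hC : v 3 = valC I := by simpa [MSp2, valC, hD, hE] using eqn 3 (by decide)
  funext X
  by_cases hX : X ∈ MSp2.V
  · simp only [MSp2, Finset.mem_insert, Finset.mem_singleton] at hX
    rcases hX with rfl | rfl | rfl | rfl | rfl | rfl <;> simp [sol, hA, hB, hS, hC, hD, hE]
  · rw [hout X hX]
    simp only [MSp2, Finset.mem_insert, Finset.mem_singleton, not_or] at hX
    simp [sol, hX]

theorem satF_iff (φ : BForm) : SatF MSp2 (fun _ => 1) I φ ↔ φ.eval (sol I) :=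
  satF_iff_of_unique_sol (isSol_sol I) (fun _ => eq_sol_of_isSol I) φ

theorem exists_isSol : ∃ v, IsSol (MSp2.intervene I) (fun _ => 1) v :=
  ⟨sol I, isSol_sol I⟩

theorem isSol_iff_eq_sol_none {v : ℕ → ℕ} :
    IsSol MSp2 (fun _ => 1) v ↔ v = sol fun _ => none :=
  ⟨eq_sol_of_isSol (fun _ => none), fun h => h ▸ isSol_sol (fun _ => none)⟩

theorem sol_none_eq_one {X : ℕ} (hX : X ∈ ({0, 1, 2, 3, 5} : Finset ℕ)) :
    sol (fun _ => none) X = 1 := by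
  simp only [Finset.mem_insert, Finset.mem_singleton] at hX
  rcases hX with rfl | rfl | rfl | rfl | rfl <;>
    simp [sol, valA, valB, valS, valC, valD, valE, bI]

theorem sol_none_four_eq_zero : sol (fun _ => none) 4 = 0 := by
  simp [sol, valA, valS, valD, bI]

theorem ac1_singleton {X : ℕ} (hX : X ∈ ({0, 1, 2} : Finset ℕ)) :
    AC1 MSp2 (fun _ => 1) {X} (fun _ => 1) (.prim 3 1) := by
  intro v hv
  rw [isSol_iff_eq_sol_none.1 hv]
  refine ⟨fun Y hY => ?_, sol_none_eq_one (by decide)⟩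
  rw [Finset.mem_singleton.1 hY]
  exact sol_none_eq_one (by simp only [Finset.mem_insert, Finset.mem_singleton] at hX ⊢; omega)

/-- `(I X).getD 1 = 1` says that `X` is left alone or pinned to `1`; then `E = S ∧ B` and
`C = D ∨ E` force `C = 1`, whatever happens to `A` and `D`. -/
theorem valC_eq_one (h : ∀ X ∈ ({1, 2, 3, 5} : Finset ℕ), (I X).getD 1 = 1) : valC I = 1 := by
  have hB : valB I = 1 := h 1 (by decide)
  have hS : valS I = 1 := h 2 (by decide)
  have hE : valE I = 1 := by simpa [valE, hB, hS, bI] using h 5 (by decide)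
  simpa [valC, hE, bI] using h 3 (by decide)

theorem valC_eq_one_iff (h : I 3 = none) : valC I = 1 ↔ valD I = 1 ∨ valE I = 1 := by
  simp [valC, h, bI_eq_one]

theorem valE_congr {J : ℕ → Option ℕ} (h1 : I 1 = J 1) (h2 : I 2 = J 2) (h5 : I 5 = J 5) :
    valE I = valE J := by
  simp [valE, valB, valS, h1, h2, h5]

theorem satF_acbI_C_eq_one {Xs Z' W' : Finset ℕ} {vs w : ℕ → ℕ}
    (hvs : IsSol MSp2 (fun _ => 1) vs) (hW' : W' ⊆ {0}) :
    SatF MSp2 (fun _ => 1) (acbI Xs (fun _ => 1) Z' vs W' w) (.prim 3 1) := by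
  rw [satF_iff, isSol_iff_eq_sol_none.1 hvs]
  refine valC_eq_one _ fun X hX => acbI_getD_const (sol_none_eq_one ?_) fun hXW => ?_
  · simp only [Finset.mem_insert, Finset.mem_singleton] at hX ⊢
    omega
  · have := hW' hXW
    simp only [Finset.mem_insert, Finset.mem_singleton] at hX this
    omega

theorem preCause_B : PreCause MSp2 (fun _ => 1) {1} (fun _ => 1) (.prim 3 1) := by
  refine ⟨ac1_singleton (by decide), ∅, fun _ => 0, fun _ => 0, Finset.empty_subset _,
    by decide, ?_, fun _ hvs _ hW' _ _ =>
      satF_acbI_C_eq_one hvs (hW'.trans (Finset.empty_subset _))⟩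
  rw [satF_iff]
  simp [BForm.eval, sol, valC, valD, valE, valA, valB, valS, witI, bI]

theorem preCause_S : PreCause MSp2 (fun _ => 1) {2} (fun _ => 1) (.prim 3 1) := by
  refine ⟨ac1_singleton (by decide), {0}, fun _ => 0, fun _ => 0, by decide,
    by decide, ?_, fun _ hvs _ hW' _ _ => satF_acbI_C_eq_one hvs hW'⟩
  rw [satF_iff]
  simp [BForm.eval, sol, valC, valD, valE, valA, valB, valS, witI, bI]

/-- `A` acts on `C` only through `D`, which is `0` in the actual world: keeping `D` at its
actual value in AC2(b) undoes whatever the witness did through `A`. -/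
theorem not_preCause_A : ¬ PreCause MSp2 (fun _ => 1) {0} (fun _ => 1) (.prim 3 1) := by
  rintro ⟨-, W, w, x', -, -, hneg, hpos⟩
  have hvs : IsSol MSp2 (fun _ => 1) (sol fun _ => none) := isSol_iff_eq_sol_none.2 rfl
  set J := witI {0} x' W w with hJdef
  have hJ : valC J ≠ 1 := by simpa [BForm.eval, sol] using (satF_iff J _).1 hneg
  by_cases h3 : 3 ∈ W
  · -- both interventions pin `C` to `w 3`
    have hK := (satF_iff _ _).1 (hpos _ hvs W le_rfl ∅ (Finset.empty_subset _))
    simp [BForm.eval, sol, valC, acbI, h3] at hK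
    simp [valC, hJdef, witI, h3, hK] at hJ
  set K := acbI {0} (fun _ => 1) ({4} \ W) (sol fun _ => none) W w with hKdef
  have hZ : {4} \ W ⊆ MSp2.V \ W := Finset.sdiff_subset_sdiff (by decide) le_rfl
  have hK : valC K = 1 := by
    simpa [BForm.eval, sol] using (satF_iff K _).1 (hpos _ hvs W le_rfl _ hZ)
  have hDE_J : ¬ (valD J = 1 ∨ valE J = 1) := by
    rwa [← valC_eq_one_iff J (by simp [hJdef, witI, h3])]
  have hE : valE K = valE J := valE_congr K (by simp [hKdef, hJdef, acbI, witI])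
    (by simp [hKdef, hJdef, acbI, witI]) (by simp [hKdef, hJdef, acbI, witI])
  have hD : valD K ≠ 1 := by
    by_cases h4 : 4 ∈ W
    · have : valD K = valD J := by simp [valD, hKdef, hJdef, acbI, witI, h4]
      exact this ▸ fun h => hDE_J (Or.inl h)
    · simp [valD, hKdef, acbI, h4, sol_none_four_eq_zero]
  rw [valC_eq_one_iff K (by simp [hKdef, acbI, h3])] at hK
  exact hK.elim hD fun h => hDE_J (Or.inr (hE ▸ h))

end MSp2

/-- in the extended Spohn model, in the context with A = B = S = 1,
A = 1 is not an actual cause of C = 1, while B = 1 and S = 1 are. -/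
theorem spohn_extended :
    ¬ IsCause MSp2 (fun _ => 1) {0} (fun _ => 1) (.prim 3 1) ∧
    IsCause MSp2 (fun _ => 1) {1} (fun _ => 1) (.prim 3 1) ∧
    IsCause MSp2 (fun _ => 1) {2} (fun _ => 1) (.prim 3 1) := by
  simp only [isCause_singleton_iff MSp2.exists_isSol]
  exact ⟨MSp2.not_preCause_A, MSp2.preCause_B, MSp2.preCause_S⟩
end

section
/- (Stability of single-variable non-causality.) If X = x is not an actual cause of φ in (M, u⃗) under the extended HP definition, M' is a conservative extension of the extended causal model M, and (M', u⃗) respects the equations for all endogenous variables of M' not in M, then X = x is not an actual cause of φ in (M', u⃗). -/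
open Classical

/-! A witness `(W, w, x')` for `X⃗ = x⃗` in `M'` induces the witness `(W ∩ 𝒱, s', x')` in `M`,
where `𝒱` are the endogenous variables of `M` and `s'` is the witness world of `M'`.
By AC2(a⁺) the world `s'` is at least as normal as the actual one, so every new variable, whose
equations `(M', u⃗)` respects, obeys its equation in `s'`; hence `s'` is also the outcome of
intervening on old variables only. Conservative extension then carries AC1, AC2(a) and AC2(b)
down to `M`, and condition CE carries AC2(a⁺). AC3 is automatic for a single conjunct, because
the empty conjunction never satisfies AC2. -/

open Finset

namespace BForm

lemma eval_congr (φ : BForm) {v w : ℕ → ℕ} (h : ∀ Y ∈ φ.vars, v Y = w Y) :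
    φ.eval v ↔ φ.eval w := by
  induction φ with
  | prim X x => simp only [eval, h X (mem_singleton_self X)]
  | not ψ ih => simp only [eval, ih h]
  | and ψ χ ihψ ihχ =>
    simp only [vars, mem_union] at h
    simp only [eval, ihψ fun Y hY => h Y (Or.inl hY), ihχ fun Y hY => h Y (Or.inr hY)]

end BForm

section Models

variable {M M' : CM} {ctx : ℕ → ℕ}

def CM.restrict (M : CM) (v : ℕ → ℕ) : ℕ → ℕ := fun X => if X ∈ M.V then v X else 0

lemma CM.eval_restrict {φ : BForm} (hφ : φ.vars ⊆ M.V) (v : ℕ → ℕ) :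
    φ.eval (M.restrict v) ↔ φ.eval v :=
  φ.eval_congr fun _ hY => if_pos (hφ hY)

lemma IsSol.eq_of_eq_some {I : ℕ → Option ℕ} {v : ℕ → ℕ} {Y a : ℕ}
    (hv : IsSol (M.intervene I) ctx v) (hY : Y ∈ M.V) (hI : I Y = some a) : v Y = a := by
  simpa [CM.intervene, hI] using hv.1 Y hY

lemma IsSol.eq_F_of_eq_none {I : ℕ → Option ℕ} {v : ℕ → ℕ} {Y : ℕ}
    (hv : IsSol (M.intervene I) ctx v) (hY : Y ∈ M.V) (hI : I Y = none) :
    v Y = M.F Y ctx v := by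
  simpa [CM.intervene, hI] using hv.1 Y hY

lemma isSol_intervene_doSet_self {S : Finset ℕ} {v : ℕ → ℕ} (hv : World M v)
    (h : ∀ Y ∈ M.V, Y ∉ S → v Y = M.F Y ctx v) : IsSol (M.intervene (doSet S v)) ctx v := by
  refine ⟨fun Y hY => ?_, hv⟩
  by_cases hYS : Y ∈ S
  · simp [CM.intervene, doSet, hYS]
  · simpa [CM.intervene, doSet, hYS] using h Y hY hYS

lemma deviates_of_ne {s : ℕ → ℕ} {Y : ℕ} (hs : World M s) (hY : Y ∈ M.V)
    (hne : s Y ≠ M.F Y ctx s) : Deviates M ctx Y s := by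
  intro v hv hvY
  have hvs : v = s := funext fun Z => by
    by_cases hZ : Z ∈ M.V
    · by_cases hZY : Z = Y
      · rwa [hZY]
      · exact hv.eq_of_eq_some hZ (if_pos (mem_erase.2 ⟨hZY, hZ⟩))
    · rw [hv.2 Z hZ, hs Z hZ]
  subst hvs
  exact hne (hv.eq_F_of_eq_none hY (if_neg (notMem_erase Y M.V)))

lemma witI_eq_doSet {Xs W : Finset ℕ} {x' s : ℕ → ℕ} (hs : ∀ X ∈ Xs, s X = x' X) :
    witI Xs x' W s = doSet (Xs ∪ W) s := by
  funext Y
  by_cases hY : Y ∈ Xs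
  · simp [witI, doSet, hY, hs Y hY]
  · simp [witI, doSet, hY]

lemma acbI_congr {Xs Z' W' : Finset ℕ} {xv vs vs' w w' : ℕ → ℕ}
    (hvs : ∀ Y ∈ Z', vs Y = vs' Y) (hw : ∀ Y ∈ W', w Y = w' Y) :
    acbI Xs xv Z' vs W' w = acbI Xs xv Z' vs' W' w' := by
  funext Y
  by_cases hZ : Y ∈ Z'
  · simp [acbI, hZ, hvs Y hZ]
  · by_cases hW : Y ∈ W' <;> simp [acbI, hZ, hW, hw]

namespace Recursive

lemma intervene (hM : Recursive M) (I : ℕ → Option ℕ) : Recursive (M.intervene I) := by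
  obtain ⟨ord, hinj, hdep⟩ := hM
  exact ⟨ord, hinj, fun X hX ctx g h hgh => congrArg (I X).getD (hdep X hX ctx g h hgh)⟩

lemma eq_of_isSol (hM : Recursive M) {v w : ℕ → ℕ} (hv : IsSol M ctx v)
    (hw : IsSol M ctx w) : v = w := by
  obtain ⟨ord, -, hdep⟩ := hM
  have key : ∀ n, ∀ X ∈ M.V, ord X = n → v X = w X := by
    intro n
    induction n using Nat.strong_induction_on with
    | _ n ih =>
      rintro X hX rfl
      rw [hv.1 X hX, hw.1 X hX]
      exact hdep X hX ctx v w fun Y hY hYX => ih _ hYX Y hY rfl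
  funext X
  by_cases hX : X ∈ M.V
  · exact key _ X hX rfl
  · rw [hv.2 X hX, hw.2 X hX]

/-- The solution is reached by iterating the equations `#M.V + 1` times from `0`. -/
lemma exists_isSol (hM : Recursive M) (ctx : ℕ → ℕ) : ∃ v, IsSol M ctx v := by
  obtain ⟨ord, -, hdep⟩ := hM
  let rank : ℕ → ℕ := fun X => #{Y ∈ M.V | ord Y < ord X}
  have rank_lt : ∀ {X Y}, Y ∈ M.V → ord Y < ord X → rank Y < rank X := fun {X Y} hY hYX =>
    card_lt_card <| (ssubset_iff_of_subset fun Z hZ => by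
      simp only [mem_filter] at hZ ⊢
      exact ⟨hZ.1, hZ.2.trans hYX⟩).2 ⟨Y, by simp [hY, hYX], by simp⟩
  let G : (ℕ → ℕ) → ℕ → ℕ := fun g X => if X ∈ M.V then M.F X ctx g else 0
  have stable : ∀ n, ∀ X ∈ M.V, rank X < n → G^[n + 1] 0 X = G^[n] 0 X := by
    intro n
    induction n with
    | zero => intro X _ h; omega
    | succ n ih =>
      intro X hX hn
      calc G^[n + 1 + 1] 0 X = M.F X ctx (G^[n + 1] 0) := by
            rw [Function.iterate_succ_apply']; exact if_pos hX
        _ = M.F X ctx (G^[n] 0) :=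
            hdep X hX ctx _ _ fun Y hY hYX => ih Y hY (by have := rank_lt hY hYX; omega)
        _ = G^[n + 1] 0 X := by rw [Function.iterate_succ_apply']; exact (if_pos hX).symm
  set v := G^[#M.V + 1] 0
  have hfix : G v = v := funext fun X => by
    by_cases hX : X ∈ M.V
    · have hrank : rank X < #M.V :=
        card_lt_card ((ssubset_iff_of_subset (filter_subset _ _)).2 ⟨X, hX, by simp⟩)
      rw [← Function.iterate_succ_apply' G]
      exact stable _ X hX (by omega)
    · simp [v, G, hX, Function.iterate_succ_apply']
  refine ⟨v, fun X hX => ?_, fun X hX => ?_⟩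
  · calc v X = G v X := by rw [hfix]
      _ = M.F X ctx v := if_pos hX
  · calc v X = G v X := by rw [hfix]
      _ = 0 := if_neg hX

end Recursive

lemma not_wit_empty (hM : Recursive M) {xv : ℕ → ℕ} {φ : BForm} {W : Finset ℕ}
    {w x' : ℕ → ℕ} : ¬ Wit M ctx ∅ xv φ W w x' := by
  rintro ⟨-, -, hna, hb⟩
  obtain ⟨vs, hvs⟩ := hM.exists_isSol ctx
  obtain ⟨t, ht⟩ := (hM.intervene (witI ∅ x' W w)).exists_isSol ctx
  have hI : acbI ∅ xv ∅ vs W w = witI ∅ x' W w := by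
    funext Y
    simp [acbI, witI]
  exact hna t ht (hb vs hvs W Subset.rfl ∅ (empty_subset _) t (hI ▸ ht))

namespace ConsExt

variable (hext : ConsExt M M') (hM : Recursive M) (hM' : Recursive M')
include hext hM hM'

/-- At an unintervened old variable `X`, `v` also solves `M'` with all other old variables fixed
to their values in `v`; conservative extension moves the resulting value of `X` to `M`. -/
lemma isSol_restrict {I : ℕ → Option ℕ} (hI : ∀ Y ∉ M.V, I Y = none) {v : ℕ → ℕ}
    (hv : IsSol (M'.intervene I) ctx v) : IsSol (M.intervene I) ctx (M.restrict v) := by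
  refine ⟨fun X hX => ?_, fun X hX => if_neg hX⟩
  have hvX : M.restrict v X = v X := if_pos hX
  cases hIX : I X with
  | some a => simpa [CM.intervene, hIX, hvX] using hv.eq_of_eq_some (hext.1 hX) hIX
  | none =>
    have hv' : IsSol (M'.intervene (doSet (M.V.erase X) v)) ctx v := by
      refine isSol_intervene_doSet_self hv.2 fun Y hY hYS => hv.eq_F_of_eq_none hY ?_
      by_cases hYM : Y ∈ M.V
      · rwa [not_not.1 fun hYX => hYS (mem_erase.2 ⟨hYX, hYM⟩)]
      · exact hI Y hYM
    have hsat : Sat M ctx (doSet (M.V.erase X) v) X (v X) :=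
      (hext.2 ctx _ X hX v).2 fun u hu => by rw [(hM'.intervene _).eq_of_isSol hu hv']
    obtain ⟨u, hu⟩ := (hM.intervene (doSet (M.V.erase X) v)).exists_isSol ctx
    have hur : u = M.restrict v := funext fun Y => by
      by_cases hYM : Y ∈ M.V
      · by_cases hYX : Y = X
        · subst hYX
          rw [hsat u hu, hvX]
        · rw [hu.eq_of_eq_some hYM (if_pos (mem_erase.2 ⟨hYX, hYM⟩))]
          exact (if_pos hYM).symm
      · rw [hu.2 Y hYM]
        exact (if_neg hYM).symm
    calc M.restrict v X = u X := by rw [hur]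
      _ = M.F X ctx u := hu.eq_F_of_eq_none hX (if_neg (notMem_erase X M.V))
      _ = (M.intervene I).F X ctx (M.restrict v) := by simp [CM.intervene, hIX, hur]

lemma exists_isSol_restrict_eq {I : ℕ → Option ℕ} (hI : ∀ Y ∉ M.V, I Y = none) {t : ℕ → ℕ}
    (ht : IsSol (M.intervene I) ctx t) :
    ∃ t', IsSol (M'.intervene I) ctx t' ∧ M.restrict t' = t := by
  obtain ⟨t', ht'⟩ := (hM'.intervene I).exists_isSol ctx
  exact ⟨t', ht', (hM.intervene I).eq_of_isSol (hext.isSol_restrict hM hM' hI ht') ht⟩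

lemma satF {I : ℕ → Option ℕ} (hI : ∀ Y ∉ M.V, I Y = none) {φ : BForm}
    (hφ : φ.vars ⊆ M.V) (h : SatF M' ctx I φ) : SatF M ctx I φ := by
  intro t ht
  obtain ⟨t', ht', rfl⟩ := hext.exists_isSol_restrict_eq hM hM' hI ht
  exact (CM.eval_restrict hφ t').2 (h t' ht')

lemma ac1 {Xs : Finset ℕ} {xv : ℕ → ℕ} {φ : BForm} (hXs : Xs ⊆ M.V) (hφ : φ.vars ⊆ M.V)
    (h : AC1 M' ctx Xs xv φ) : AC1 M ctx Xs xv φ := by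
  intro v hv
  obtain ⟨v', hv', rfl⟩ := hext.exists_isSol_restrict_eq hM hM' (I := fun _ => none)
    (fun _ _ => rfl) hv
  obtain ⟨hXv, hφv⟩ := h v' hv'
  exact ⟨fun X hX => (if_pos (hXs hX)).trans (hXv X hX), (CM.eval_restrict hφ v').2 hφv⟩

lemma ac2b_inter {Xs W : Finset ℕ} {xv w s : ℕ → ℕ} {φ : BForm} (hXs : Xs ⊆ M.V)
    (hφ : φ.vars ⊆ M.V) (hsw : ∀ Y ∈ W ∩ M.V, s Y = w Y)
    (hb : ∀ vs, IsSol M' ctx vs → ∀ W' ⊆ W, ∀ Z' ⊆ M'.V \ W,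
      SatF M' ctx (acbI Xs xv Z' vs W' w) φ) :
    ∀ vs, IsSol M ctx vs → ∀ W' ⊆ W ∩ M.V, ∀ Z' ⊆ M.V \ (W ∩ M.V),
      SatF M ctx (acbI Xs xv Z' vs W' s) φ := by
  intro vs hvs W' hW' Z' hZ'
  obtain ⟨vs', hvs', rfl⟩ := hext.exists_isSol_restrict_eq hM hM' (I := fun _ => none)
    (fun _ _ => rfl) hvs
  rw [acbI_congr (vs := M.restrict vs') (vs' := vs') (w' := w)
    (fun Y hY => if_pos (mem_sdiff.1 (hZ' hY)).1) fun Y hY => hsw Y (hW' hY)]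
  refine hext.satF hM hM' (fun Y hY => ?_) hφ
    (hb vs' hvs' W' (hW'.trans inter_subset_left) Z' ?_)
  · have hYZ : Y ∉ Z' := fun h => hY (mem_sdiff.1 (hZ' h)).1
    have hYW : Y ∉ W' := fun h => hY (mem_inter.1 (hW' h)).2
    have hYX : Y ∉ Xs := fun h => hY (hXs h)
    simp [acbI, hYZ, hYW, hYX]
  · intro Y hY
    obtain ⟨hYM, hYW⟩ := mem_sdiff.1 (hZ' hY)
    exact mem_sdiff.2 ⟨hext.1 hYM, fun h => hYW (mem_inter.2 ⟨h, hYM⟩)⟩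

end ConsExt

end Models

section Normality

variable {M M' : ECM} {ctx : ℕ → ℕ}

lemma Respects.eq_F {Y : ℕ} {s su : ℕ → ℕ} (h : Respects M ctx Y) (hY : Y ∈ M.V)
    (hs : World M.toCM s) (hsu : IsSol M.toCM ctx su) (hnorm : M.normGE s su) :
    s Y = M.F Y ctx s :=
  by_contra fun hne => h s hs (deviates_of_ne hs hY hne) su hsu hnorm

lemma normAbove_of_isSol (hM : Recursive M.toCM) {I : ℕ → Option ℕ} {s : ℕ → ℕ}
    (hs : IsSol (M.intervene I) ctx s) (h : ∀ su, IsSol M.toCM ctx su → M.normGE s su) :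
    NormAbove M ctx I := fun _ su ht hsu => (hM.intervene I).eq_of_isSol ht hs ▸ h su hsu

lemma isSol_witnessWorld_doSet (hM : Recursive M.toCM) (V₀ : Finset ℕ)
    (hresp : ∀ Y ∈ M.V \ V₀, Respects M ctx Y) {Xs W : Finset ℕ} {w x' s : ℕ → ℕ}
    (hs : IsSol (M.intervene (witI Xs x' W w)) ctx s) (hnorm : NormAbove M ctx (witI Xs x' W w)) :
    IsSol (M.intervene (doSet (Xs ∪ W ∩ V₀) s)) ctx s := by
  obtain ⟨su, hsu⟩ := hM.exists_isSol ctx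
  refine isSol_intervene_doSet_self hs.2 fun Y hY hYS => ?_
  by_cases hY₀ : Y ∈ V₀
  · simp only [mem_union, mem_inter, not_or, not_and] at hYS
    have hYW : Y ∉ W := fun h => hYS.2 h hY₀
    exact hs.eq_F_of_eq_none hY (by simp [witI, hYS.1, hYW])
  · exact (hresp Y (mem_sdiff.2 ⟨hY, hY₀⟩)).eq_F hY hs.2 hsu (hnorm s su hs hsu)

variable (hext : EConsExt M M') (hM : Recursive M.toCM) (hM' : Recursive M'.toCM)
include hext hM hM'

lemma EConsExt.eWit_inter {Xs : Finset ℕ} {xv : ℕ → ℕ} {φ : BForm} (hXs : Xs ⊆ M.V)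
    (hφ : φ.vars ⊆ M.V) (hresp : ∀ Y ∈ M'.V \ M.V, Respects M' ctx Y) {W : Finset ℕ}
    {w x' s : ℕ → ℕ} (h : EWit M' ctx Xs xv φ W w x')
    (hs : IsSol (M'.intervene (witI Xs x' W w)) ctx s) :
    EWit M ctx Xs xv φ (W ∩ M.V) s x' := by
  obtain ⟨⟨hW, hXsW, hna, hb⟩, hnorm⟩ := h
  have hXsW' : ∀ X ∈ Xs, X ∉ W := fun X hX => (mem_sdiff.1 (hXsW hX)).2
  have hI : witI Xs x' (W ∩ M.V) s = doSet (Xs ∪ W ∩ M.V) s :=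
    witI_eq_doSet fun X hX => hs.eq_of_eq_some (hext.1.1 (hXs hX)) (if_pos hX)
  have hsupp : ∀ Y ∉ M.V, doSet (Xs ∪ W ∩ M.V) s Y = none := fun Y hY =>
    if_neg (by simp only [mem_union, mem_inter, not_or]; exact ⟨fun h => hY (hXs h), by tauto⟩)
  have hs₀ := isSol_witnessWorld_doSet hM' M.V hresp hs hnorm
  refine ⟨⟨inter_subset_right, fun X hX => ?_, ?_, ?_⟩, ?_⟩
  · exact mem_sdiff.2 ⟨hXs hX, fun h => hXsW' X hX (mem_inter.1 h).1⟩
  · rw [hI]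
    refine hext.1.satF hM hM' hsupp hφ fun t ht => ?_
    rw [(hM'.intervene _).eq_of_isSol ht hs₀]
    exact hna s hs
  · have hsw : ∀ Y ∈ W ∩ M.V, s Y = w Y := fun Y hY => by
      have hYW := (mem_inter.1 hY).1
      have hYX : Y ∉ Xs := fun h => hXsW' Y h hYW
      exact hs.eq_of_eq_some (hW hYW) (by simp [witI, hYW, hYX])
    exact hext.1.ac2b_inter hM hM' hXs hφ hsw hb
  · rw [hI]
    exact (hext.2 ctx _ (union_subset hXs inter_subset_right) s).2
      (normAbove_of_isSol hM' hs₀ fun su hsu => hnorm s su hs hsu)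

lemma EConsExt.ePreCause {Xs : Finset ℕ} {xv : ℕ → ℕ} {φ : BForm} (hXs : Xs ⊆ M.V)
    (hφ : φ.vars ⊆ M.V) (hresp : ∀ Y ∈ M'.V \ M.V, Respects M' ctx Y)
    (h : EPreCause M' ctx Xs xv φ) : EPreCause M ctx Xs xv φ := by
  obtain ⟨hac1, W, w, x', hwit⟩ := h
  obtain ⟨s, hs⟩ := (hM'.intervene (witI Xs x' W w)).exists_isSol ctx
  exact ⟨hext.1.ac1 hM hM' hXs hφ hac1, W ∩ M.V, s, x',
    hext.eWit_inter hM hM' hXs hφ hresp hwit hs⟩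

end Normality

lemma eIsCause_singleton_of_ePreCause {M : ECM} (hM : Recursive M.toCM) {ctx xv : ℕ → ℕ}
    {φ : BForm} {X : ℕ} (h : EPreCause M ctx {X} xv φ) : EIsCause M ctx {X} xv φ := by
  refine ⟨h, fun Xs hXs ⟨_, _, _, _, hwit, _⟩ => ?_⟩
  rw [ssubset_singleton_iff] at hXs
  subst hXs
  exact not_wit_empty hM hwit

/-- stability of single-variable non-causality under conservative
extensions that respect the equations for the new variables. -/
theorem stability_single (M M' : ECM) (hM : Recursive M.toCM) (hM' : Recursive M'.toCM)
    (hext : EConsExt M M') (ctx : ℕ → ℕ) (X : ℕ) (hX : X ∈ M.V)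
    (xv : ℕ → ℕ) (φ : BForm) (hφ : φ.vars ⊆ M.V)
    (hnc : ¬ EIsCause M ctx {X} xv φ)
    (hresp : ∀ v0 ∈ M'.V \ M.V, Respects M' ctx v0) :
    ¬ EIsCause M' ctx {X} xv φ := fun h =>
  hnc <| eIsCause_singleton_of_ePreCause hM <|
    hext.ePreCause hM hM' (singleton_subset_iff.2 hX) hφ hresp h.1
end
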